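/- arXiv:2511.20984 — 2 statements merged into one kernel-verified Lean document; each statement's English description precedes it below -/
import Mathlib

section
/- If G^g and H^h are non-equivalent impartial games with activeness, then there exists an active game X^1 such that o(G^g + X^1) = 𝒫 and o(H^h + X^1) = 𝒩. -/
inductive AGame : Type where
  | mk : List AGame → Bool → AGame

namespace AGame

noncomputable instance : DecidableEq AGame := Classical.decEq _

def opts : AGame → List AGame | mk gs _ => gs
def act : AGame → Bool | mk _ g => g

theorem sizeOf_lt_of_mem {G G' : AGame} (h : G' ∈ G.opts) : sizeOf G' < sizeOf G := by
  cases G with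
  | mk gs g =>
    simp only [opts] at h
    have := List.sizeOf_lt_of_mem h
    simp [AGame.mk.sizeOf_spec]
    omega

/-- Disjunctive sum of games with activeness. -/
def add (G H : AGame) : AGame :=
  mk (G.opts.attach.map (fun x => add x.1 H) ++
      H.opts.attach.map (fun y => add G y.1)) (G.act || H.act)
termination_by sizeOf G + sizeOf H
decreasing_by
  · have := sizeOf_lt_of_mem x.2; omega
  · have := sizeOf_lt_of_mem y.2; omega

/-- `PPos G` means the outcome of `G` is 𝒫 (second player wins). -/
def PPos (G : AGame) : Prop :=
  G.act = false ∨ ∀ G' ∈ G.opts.attach, ¬ PPos G'.1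
termination_by sizeOf G
decreasing_by
  have := sizeOf_lt_of_mem G'.2; omega

/-- Hereditary set-equality (the paper's ≅). -/
def Identical (G H : AGame) : Prop :=
  G.act = H.act ∧ (∀ G' ∈ G.opts.attach, ∃ H' ∈ H.opts.attach, Identical G'.1 H'.1)
              ∧ (∀ H' ∈ H.opts.attach, ∃ G' ∈ G.opts.attach, Identical G'.1 H'.1)
termination_by sizeOf G + sizeOf H
decreasing_by
  · have := sizeOf_lt_of_mem G'.2; have := sizeOf_lt_of_mem H'.2; omega
  · have := sizeOf_lt_of_mem G'.2; have := sizeOf_lt_of_mem H'.2; omega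

/-- Equivalence of games with activeness: same outcome in every sum. -/
def Equiv (G H : AGame) : Prop := ∀ X : AGame, (PPos (add G X) ↔ PPos (add H X))

end AGame

namespace AGame

/-- Nimbers with activeness: `star γ n ≅ {star γ j : j < n}^{γ n}`. -/
def star (γ : ℕ → Bool) : ℕ → AGame
  | n => mk ((List.range n).attach.map (fun j => star γ j.1)) (γ n)
termination_by n => n
decreasing_by
  have := j.2; simp [List.mem_range] at this; omega

/-- The generalized Grundy set `𝒢^γ(G)`. -/
def GSet (γ : ℕ → Bool) (G : AGame) : Set ℕ := {n | PPos (add G (star γ n))}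

/-- Minimum excludant of a set of naturals. -/
noncomputable def mex (S : Set ℕ) : ℕ := sInf {n | n ∉ S}

/-- Ordinary Grundy value, computed ignoring activeness. -/
noncomputable def grundy (G : AGame) : ℕ :=
  mex {m | ∃ G' ∈ G.opts.attach, grundy G'.1 = m}
termination_by sizeOf G
decreasing_by
  have := sizeOf_lt_of_mem G'.2; omega

/-- The three types of games with activeness. -/
inductive AType : Type where
  | inactive : AType            -- type 0
  | activeSomeInactive : AType  -- type 1_{∃0}
  | activeAllActive : AType     -- type 1_{∀1}

open Classical in
/-- `type(G^g)`. -/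
noncomputable def typ (G : AGame) : AType :=
  if G.act = false then .inactive
  else if ∃ G' ∈ G.opts, G'.act = false then .activeSomeInactive
  else .activeAllActive

/-- Formal birthday `b(G)`. -/
def bday (G : AGame) : ℕ :=
  (G.opts.attach.map (fun G' => bday G'.1 + 1)).foldr max 0
termination_by sizeOf G
decreasing_by
  have := sizeOf_lt_of_mem G'.2; omega

/-- An option `G'` of `G` is reversible if it has an option equivalent to `G`. -/
def Reversible (G G' : AGame) : Prop := ∃ G'' ∈ G'.opts, Equiv G'' G

/-- A canonical game: all options canonical and no option reversible. -/
def Canonical (G : AGame) : Prop :=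
  (∀ G' ∈ G.opts.attach, Canonical G'.1) ∧ (∀ G' ∈ G.opts, ¬ Reversible G G')
termination_by sizeOf G
decreasing_by
  have := sizeOf_lt_of_mem G'.2; omega

/-- A transitive game: all options transitive and options of options are options. -/
def TransGame (G : AGame) : Prop :=
  (∀ G' ∈ G.opts.attach, TransGame G'.1) ∧ (∀ G' ∈ G.opts, ∀ G'' ∈ G'.opts, G'' ∈ G.opts)
termination_by sizeOf G
decreasing_by
  have := sizeOf_lt_of_mem G'.2; omega

/-- `G` is covered by `H` if every option of `G` is equivalent to some option of `H`. -/
def Covered (G H : AGame) : Prop := ∀ G' ∈ G.opts, ∃ H' ∈ H.opts, Equiv G' H'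

/-- The relation `G ⋈ H`. -/
def Bowtie (G H : AGame) : Prop :=
  (∀ G' ∈ G.opts, ¬ Equiv G' H) ∧ (∀ H' ∈ H.opts, ¬ Equiv G H')

/-- The linear chain `∅^{g₀ g₁ … gₙ}`. -/
def chain (g : ℕ → Bool) : ℕ → AGame
  | 0 => mk [] (g 0)
  | n + 1 => mk [chain g n] (g (n + 1))

end AGame

/-!
A distinguisher `X₀` with `o(G + X₀) = 𝒩` and `o(H + X₀) = 𝒫` can be reversed: the active game
`X = {X₀, *grundy(g) : g an option of G}`, built from the all-active nimbers `*n`, has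
`o(G + X) = 𝒫` and `o(H + X) = 𝒩`. Indeed `H + X → H + X₀` wins, while in `G + X` every move
loses: `G + X₀` is 𝒩, `G + *grundy(g)` is 𝒩 since `grundy g ≠ grundy G`, and `g + X` is answered
by `g + *grundy(g)`, which is 𝒫 by Sprague–Grundy theory, valid here because every position of a
sum with an active nimber is active. Any distinguisher can be reversed once or twice as needed.
-/

namespace AGame

lemma pPos_iff (K : AGame) : PPos K ↔ K.act = false ∨ ∀ Y ∈ K.opts, ¬ PPos Y := by
  rw [PPos]
  simp only [List.mem_attach, true_implies, Subtype.forall]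

lemma not_pPos_iff (K : AGame) : ¬ PPos K ↔ K.act = true ∧ ∃ Y ∈ K.opts, PPos Y := by
  rw [pPos_iff]
  simp

lemma act_add (G H : AGame) : (add G H).act = (G.act || H.act) := by
  rw [add]; rfl

lemma mem_opts_add {G H Y : AGame} :
    Y ∈ (add G H).opts ↔ (∃ g ∈ G.opts, add g H = Y) ∨ ∃ x ∈ H.opts, add G x = Y := by
  rw [add]
  simp only [opts.eq_1, List.mem_append, List.mem_map, List.mem_attach, true_and,
    Subtype.exists, exists_prop]

lemma add_mem_opts_add_left {G H g : AGame} (hg : g ∈ G.opts) : add g H ∈ (add G H).opts :=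
  mem_opts_add.2 (Or.inl ⟨g, hg, rfl⟩)

lemma add_mem_opts_add_right {G H x : AGame} (hx : x ∈ H.opts) : add G x ∈ (add G H).opts :=
  mem_opts_add.2 (Or.inr ⟨x, hx, rfl⟩)

lemma mex_notMem {S : Set ℕ} (hS : S.Finite) : mex S ∉ S :=
  Nat.sInf_mem hS.infinite_compl.nonempty

lemma mex_le_of_notMem {S : Set ℕ} {n : ℕ} (hn : n ∉ S) : mex S ≤ n :=
  Nat.sInf_le hn

lemma grundy_eq_mex (G : AGame) : grundy G = mex {m | ∃ g ∈ G.opts, grundy g = m} := by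
  rw [grundy]
  simp only [List.mem_attach, true_and, Subtype.exists, exists_prop]

lemma grundy_ne_of_mem {G g : AGame} (hg : g ∈ G.opts) : grundy g ≠ grundy G := by
  have hfin : {m | ∃ g ∈ G.opts, grundy g = m}.Finite := by
    simpa only [List.mem_map] using (G.opts.map grundy).finite_toSet
  intro he
  exact mex_notMem hfin (grundy_eq_mex G ▸ ⟨g, hg, he⟩)

lemma grundy_le_of_forall_ne {G : AGame} {n : ℕ} (h : ∀ g ∈ G.opts, grundy g ≠ n) :
    grundy G ≤ n := by
  rw [grundy_eq_mex]
  exact mex_le_of_notMem fun ⟨g, hg, he⟩ => h g hg he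

def nim (n : ℕ) : AGame := star (fun _ => true) n

lemma act_nim (n : ℕ) : (nim n).act = true := by
  rw [nim, star]; rfl

lemma mem_opts_nim {n : ℕ} {Y : AGame} : Y ∈ (nim n).opts ↔ ∃ j < n, nim j = Y := by
  rw [nim, star]
  simp only [opts.eq_1, List.mem_map, List.mem_attach, true_and, Subtype.exists, List.mem_range,
    exists_prop, nim]

lemma pPos_add_nim_iff (G : AGame) (n : ℕ) : PPos (add G (nim n)) ↔ grundy G = n := by
  have hoptions : PPos (add G (nim n)) ↔
      (∀ g ∈ G.opts, ¬ PPos (add g (nim n))) ∧ ∀ j < n, ¬ PPos (add G (nim j)) := by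
    simp only [pPos_iff (add G (nim n)), act_add, act_nim, Bool.or_true, Bool.true_eq_false,
      false_or, mem_opts_add, mem_opts_nim]
    grind
  have ihg : ∀ g ∈ G.opts, PPos (add g (nim n)) ↔ grundy g = n := fun g hg =>
    have := sizeOf_lt_of_mem hg
    pPos_add_nim_iff g n
  have ihj : ∀ j < n, PPos (add G (nim j)) ↔ grundy G = j := fun j _ => pPos_add_nim_iff G j
  rw [hoptions]
  constructor
  · rintro ⟨hg, hj⟩
    have hle : grundy G ≤ n := grundy_le_of_forall_ne fun g hmem => (ihg g hmem).not.1 (hg g hmem)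
    exact le_antisymm hle (not_lt.1 fun hlt => hj _ hlt ((ihj _ hlt).2 rfl))
  · rintro rfl
    exact ⟨fun g hg => (ihg g hg).not.2 (grundy_ne_of_mem hg),
      fun j hj => (ihj j hj).not.2 hj.ne'⟩
termination_by sizeOf G + n

noncomputable def reverser (G X₀ : AGame) : AGame :=
  mk (X₀ :: G.opts.map fun g => nim (grundy g)) true

lemma act_add_reverser (H G X₀ : AGame) : (add H (reverser G X₀)).act = true := by
  rw [act_add, reverser, act, Bool.or_true]

lemma pPos_add_reverser {G X₀ : AGame} (hG : ¬ PPos (add G X₀)) :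
    PPos (add G (reverser G X₀)) := by
  refine (pPos_iff _).2 (Or.inr fun Y hY => ?_)
  rcases mem_opts_add.1 hY with ⟨g, hg, rfl⟩ | ⟨x, hx, rfl⟩
  · have hrespond : add g (nim (grundy g)) ∈ (add g (reverser G X₀)).opts :=
      add_mem_opts_add_right (List.mem_cons_of_mem _ (List.mem_map_of_mem hg))
    exact (not_pPos_iff _).2
      ⟨act_add_reverser _ _ _, _, hrespond, (pPos_add_nim_iff g _).2 rfl⟩
  · rcases List.mem_cons.1 hx with rfl | hx
    · exact hG
    · obtain ⟨g, hg, rfl⟩ := List.mem_map.1 hx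
      exact (pPos_add_nim_iff G _).not.2 (grundy_ne_of_mem hg).symm

lemma not_pPos_add_reverser {G H X₀ : AGame} (hH : PPos (add H X₀)) :
    ¬ PPos (add H (reverser G X₀)) :=
  (not_pPos_iff _).2
    ⟨act_add_reverser _ _ _, _, add_mem_opts_add_right List.mem_cons_self, hH⟩

end AGame

/-- If `G ≠ H`, there is an active game `X^1` with `o(G+X^1)=𝒫` and `o(H+X^1)=𝒩`. -/
theorem AGame.exists_distinguisher (G H : AGame) (h : ¬ AGame.Equiv G H) :
    ∃ X : AGame, X.act = true ∧ AGame.PPos (AGame.add G X) ∧ ¬ AGame.PPos (AGame.add H X) := by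
  obtain ⟨X₀, hX₀⟩ := not_forall.1 h
  by_cases hG : PPos (add G X₀)
  · have hH : ¬ PPos (add H X₀) := fun hH => hX₀ (iff_of_true hG hH)
    exact ⟨reverser G (reverser H X₀), rfl, pPos_add_reverser (not_pPos_add_reverser hG),
      not_pPos_add_reverser (pPos_add_reverser hH)⟩
  · have hH : PPos (add H X₀) := by_contra fun hH => hX₀ (iff_of_false hG hH)
    exact ⟨reverser G X₀, rfl, pPos_add_reverser hG, not_pPos_add_reverser hH⟩
end

section
/- Distinguishing Theorem: for games G₁^{g₁},...,Gₘ^{gₘ}, H₁^{h₁},...,Hₙ^{hₙ} with activeness, there exists an active game X^1 with o(Gᵢ^{gᵢ}+X^1)=𝒫 for all i∈[m] and o(Hⱼ^{hⱼ}+X^1)=𝒩 for all j∈[n] if and only if (b1) Gᵢ^{gᵢ} ⋈ Gⱼ^{gⱼ} for all i,j∈[m], and (b2) Gᵢ^{gᵢ} ≠ Hⱼ^{hⱼ} for all i∈[m], j∈[n]. -/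
/-!
If an active `X` makes every `Gᵢ + X` a 𝒫-position, then each option `G' + X` is an
𝒩-position, so `G'` can be equivalent to no `Gⱼ`; and no `Gᵢ` can be equivalent to an `Hⱼ`.

Conversely, it suffices to find, for every option `Z` of a `Gᵢ` and for every `Z = Hⱼ`, a game
`Y_Z` with `Z + Y_Z ∈ 𝒫` and `Gₖ + Y_Z ∈ 𝒩` for all `k`: the active game with options `Y_Z`
then separates the `Gᵢ` from the `Hⱼ`. The same construction, applied to the single game `Z`,
produces `Y_Z` from separators of each pair `Gₖ, Z`, which exist because `Gₖ ≢ Z`, and from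
separators of `Z` from its own options, given by the mirror game `Z' + (Z' + ∅¹) ∈ 𝒫`.
-/

namespace AGame

lemma act_add_s12 (A B : AGame) : (add A B).act = (A.act || B.act) := by
  rw [add]; rfl

lemma act_add_of_act_right (A : AGame) {X : AGame} (hX : X.act = true) :
    (add A X).act = true := by
  rw [act_add_s12, hX, Bool.or_true]

lemma mem_opts_add_iff {Z A B : AGame} : Z ∈ (add A B).opts ↔
    (∃ A' ∈ A.opts, Z = add A' B) ∨ (∃ B' ∈ B.opts, Z = add A B') := by
  rw [add]
  simp only [opts, List.mem_append, List.mem_map, List.mem_attach, true_and, Subtype.exists]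
  grind

lemma mem_opts_add_left {A A' : AGame} (B : AGame) (h : A' ∈ A.opts) :
    add A' B ∈ (add A B).opts :=
  mem_opts_add_iff.2 (Or.inl ⟨A', h, rfl⟩)

lemma mem_opts_add_right (A : AGame) {B B' : AGame} (h : B' ∈ B.opts) :
    add A B' ∈ (add A B).opts :=
  mem_opts_add_iff.2 (Or.inr ⟨B', h, rfl⟩)

lemma PPos_iff (G : AGame) : PPos G ↔ G.act = false ∨ ∀ G' ∈ G.opts, ¬ PPos G' := by
  rw [PPos]
  simp only [List.mem_attach, true_implies, Subtype.forall]

lemma not_PPos_of_mem_opts {G G' : AGame} (hG : G.act = true) (hG' : G' ∈ G.opts)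
    (h : PPos G') : ¬ PPos G := by
  rw [PPos_iff]
  rintro (hG₀ | hopts)
  · simp [hG] at hG₀
  · exact hopts G' hG' h

lemma PPos_add_iff {A X : AGame} (hX : X.act = true) :
    PPos (add A X) ↔
      (∀ A' ∈ A.opts, ¬ PPos (add A' X)) ∧ ∀ X' ∈ X.opts, ¬ PPos (add A X') := by
  simp only [PPos_iff (add A X), act_add_s12, hX, Bool.or_true, Bool.true_eq_false, false_or,
    mem_opts_add_iff]
  grind

def activeEmpty : AGame := mk [] true

lemma act_activeEmpty : activeEmpty.act = true := rfl

/-- The mirror strategy: the second player copies each move into the other copy of `A`. -/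
theorem PPos_add_add_activeEmpty (A : AGame) : PPos (add A (add A activeEmpty)) := by
  have hact (B C : AGame) : (add B (add C activeEmpty)).act = true :=
    act_add_of_act_right _ (act_add_of_act_right _ act_activeEmpty)
  rw [PPos_add_iff (act_add_of_act_right _ act_activeEmpty)]
  constructor
  · intro A' hA'
    exact not_PPos_of_mem_opts (hact A' A) (mem_opts_add_right A' (mem_opts_add_left _ hA'))
      (PPos_add_add_activeEmpty A')
  · intro X' hX'
    obtain ⟨A', hA', rfl⟩ | ⟨E, hE, -⟩ := mem_opts_add_iff.1 hX'
    · exact not_PPos_of_mem_opts (hact A A') (mem_opts_add_left _ hA')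
        (PPos_add_add_activeEmpty A')
    · simp [activeEmpty, opts] at hE
termination_by sizeOf A
decreasing_by all_goals exact sizeOf_lt_of_mem hA'

def Separates (X : AGame) (P N : Set AGame) : Prop :=
  (∀ A ∈ P, PPos (add A X)) ∧ ∀ B ∈ N, ¬ PPos (add B X)

lemma separates_singleton_iff {X Z : AGame} {N : Set AGame} :
    Separates X {Z} N ↔ PPos (add Z X) ∧ ∀ B ∈ N, ¬ PPos (add B X) := by
  simp [Separates]

lemma separates_add_activeEmpty_of_mem_opts {A A' : AGame} (h : A' ∈ A.opts) :
    Separates (add A' activeEmpty) {A'} {A} := by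
  refine separates_singleton_iff.2 ⟨PPos_add_add_activeEmpty A', ?_⟩
  rintro B rfl
  exact not_PPos_of_mem_opts (act_add_of_act_right _ (act_add_of_act_right _ act_activeEmpty))
    (mem_opts_add_left _ h) (PPos_add_add_activeEmpty A')

lemma exists_active_of_finite {T : Set AGame} (hT : T.Finite) {S : AGame → AGame → Prop}
    (h : ∀ Z ∈ T, ∃ Y, S Z Y) :
    ∃ X : AGame, X.act = true ∧ (∀ Y ∈ X.opts, ∃ Z ∈ T, S Z Y) ∧
      ∀ Z ∈ T, ∃ Y ∈ X.opts, S Z Y := by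
  choose! f hf using h
  refine ⟨mk (hT.toFinset.toList.map f) true, rfl, ?_, ?_⟩
  · simp only [opts, List.mem_map, Finset.mem_toList, Set.Finite.mem_toFinset]
    rintro _ ⟨Z, hZ, rfl⟩
    exact ⟨Z, hZ, hf Z hZ⟩
  · intro Z hZ
    exact ⟨f Z, List.mem_map.2 ⟨Z, by simpa using hZ, rfl⟩, hf Z hZ⟩

/-- The separator is the active game whose options are one separator `Y` for each option `A'`
and each `B`: then `A' + X` and `B + X` have the 𝒫-option `A' + Y`, resp. `B + Y`. -/
theorem exists_active_separates {P N : Set AGame} (hP : P.Finite) (hN : N.Finite)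
    (hPopts : ∀ A ∈ P, ∀ A' ∈ A.opts, ∃ Y, Separates Y {A'} P)
    (hNsep : ∀ B ∈ N, ∃ Y, Separates Y {B} P) :
    ∃ X : AGame, X.act = true ∧ Separates X P N := by
  set T := (⋃ A ∈ P, {A' | A' ∈ A.opts}) ∪ N
  have hT : T.Finite := (hP.biUnion fun A _ => A.opts.finite_toSet).union hN
  have hopts_mem : ∀ A ∈ P, ∀ A' ∈ A.opts, A' ∈ T := fun A hA A' hA' =>
    Or.inl (Set.mem_biUnion hA hA')
  have hTsep : ∀ Z ∈ T, ∃ Y, Separates Y {Z} P := by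
    rintro Z (hZ | hZ)
    · obtain ⟨A, hA, hZ⟩ := Set.mem_iUnion₂.1 hZ
      exact hPopts A hA Z hZ
    · exact hNsep Z hZ
  obtain ⟨X, hX, hXopts, hXcover⟩ := exists_active_of_finite hT hTsep
  have not_PPos_of_mem_T : ∀ B ∈ T, ¬ PPos (add B X) := fun B hB => by
    obtain ⟨Y, hY, hsep⟩ := hXcover B hB
    exact not_PPos_of_mem_opts (act_add_of_act_right _ hX) (mem_opts_add_right _ hY)
      (separates_singleton_iff.1 hsep).1
  refine ⟨X, hX, fun A hA => (PPos_add_iff hX).2 ⟨?_, ?_⟩,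
    fun B hB => not_PPos_of_mem_T B (Or.inr hB)⟩
  · exact fun A' hA' => not_PPos_of_mem_T A' (hopts_mem A hA A' hA')
  · intro Y hY
    obtain ⟨Z, -, hsep⟩ := hXopts Y hY
    exact (separates_singleton_iff.1 hsep).2 A hA

lemma Equiv.symm {A B : AGame} (h : Equiv A B) : Equiv B A := fun X => (h X).symm

/-- A sum witnessing `A ≢ B` may have the wrong polarity; one round of `exists_active_separates`
turns it around. -/
theorem exists_separates_of_not_equiv {A B : AGame} (h : ¬ Equiv A B) :
    ∃ Y, Separates Y {A} {B} := by
  obtain ⟨W, hW⟩ := not_forall.1 h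
  by_cases hA : PPos (add A W)
  · exact ⟨W, separates_singleton_iff.2 ⟨hA, by simpa using fun hB => hW (iff_of_true hA hB)⟩⟩
  · have hB : PPos (add B W) := by tauto
    obtain ⟨X, -, hX⟩ :=
      exists_active_separates (Set.finite_singleton A) (Set.finite_singleton B)
      (by simpa using fun A' hA' => ⟨_, separates_add_activeEmpty_of_mem_opts hA'⟩)
      (by simpa using ⟨W, separates_singleton_iff.2 ⟨hB, by simpa using hA⟩⟩)
    exact ⟨X, hX⟩

theorem exists_separates_of_forall_not_equiv {Z : AGame} {N : Set AGame} (hN : N.Finite)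
    (h : ∀ B ∈ N, ¬ Equiv Z B) : ∃ Y, Separates Y {Z} N := by
  obtain ⟨X, -, hX⟩ := exists_active_separates (Set.finite_singleton Z) hN
    (by simpa using fun Z' hZ' => ⟨_, separates_add_activeEmpty_of_mem_opts hZ'⟩)
    (fun B hB => exists_separates_of_not_equiv fun hBZ => h B hB hBZ.symm)
  exact ⟨X, hX⟩

lemma Separates.not_equiv {X A B : AGame} {P N : Set AGame} (hX : Separates X P N)
    (hA : A ∈ P) (hB : B ∈ N) : ¬ Equiv A B :=
  fun hAB => hX.2 B hB ((hAB X).1 (hX.1 A hA))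

lemma Separates.bowtie {X A B : AGame} {P N : Set AGame} (hact : X.act = true)
    (hX : Separates X P N) (hA : A ∈ P) (hB : B ∈ P) : Bowtie A B := by
  have hopts : ∀ C ∈ P, ∀ C' ∈ C.opts, ¬ PPos (add C' X) :=
    fun C hC => ((PPos_add_iff hact).1 (hX.1 C hC)).1
  exact ⟨fun A' hA' hA'B => hopts A hA A' hA' ((hA'B X).2 (hX.1 B hB)),
    fun B' hB' hAB' => hopts B hB B' hB' ((hAB' X).1 (hX.1 A hA))⟩

end AGame

/-- Distinguishing Theorem. -/
theorem AGame.distinguishing (m n : ℕ) (Gs : Fin m → AGame) (Hs : Fin n → AGame) :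
    (∃ X : AGame, X.act = true ∧ (∀ i, AGame.PPos (AGame.add (Gs i) X)) ∧
        (∀ j, ¬ AGame.PPos (AGame.add (Hs j) X)))
    ↔ ((∀ i j, AGame.Bowtie (Gs i) (Gs j)) ∧ (∀ i j, ¬ AGame.Equiv (Gs i) (Hs j))) := by
  have hsep : ∀ X, Separates X (Set.range Gs) (Set.range Hs) ↔
      (∀ i, PPos (add (Gs i) X)) ∧ ∀ j, ¬ PPos (add (Hs j) X) := by
    simp [Separates]
  simp only [← hsep]
  constructor
  · rintro ⟨X, hact, hX⟩
    exact ⟨fun i j => hX.bowtie hact ⟨i, rfl⟩ ⟨j, rfl⟩,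
      fun i j => hX.not_equiv ⟨i, rfl⟩ ⟨j, rfl⟩⟩
  · rintro ⟨hbowtie, hnequiv⟩
    refine exists_active_separates (Set.finite_range Gs) (Set.finite_range Hs) ?_ ?_
    · rintro _ ⟨i, rfl⟩ G' hG'
      exact exists_separates_of_forall_not_equiv (Set.finite_range Gs)
        (by simpa using fun k => (hbowtie i k).1 G' hG')
    · rintro _ ⟨j, rfl⟩
      exact exists_separates_of_forall_not_equiv (Set.finite_range Gs)
        (by simpa using fun k hH => hnequiv k j hH.symm)
end
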